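/- arXiv:2503.11526 — 3 statements merged into one kernel-verified Lean document; each statement's English description precedes it below -/
import Mathlib

section
/- Let F : V → ℝ and let v, x, i ∈ V with v < x ≤ i (so v is a proper ancestor of x, and x is an ancestor of i). Let p_x denote the parent of x. Then sum_F(v,i) − sum_F(x,i) = sum_F(v,p_x) − F(x). -/
/-! Splitting the chain `T[v,i]` at `x` gives the disjoint union `T[v,p_x] ∪ T[x,i]`. A vertex
hanging off `T[v,p_x]` or off `T[x,i]` hangs off `T[v,i]`, with the single exception of `x`
itself, which hangs off `T[v,p_x]` but lies on `T[v,i]`; and since parents are unique in a tree,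
no vertex hangs off both pieces. Hence `sum_F(v,p_x) + sum_F(x,i) = F(x) + sum_F(v,i)`. -/

open Finset
open scoped Classical

noncomputable section

variable {V : Type} [Fintype V] [PartialOrder V]

/-- The chain `T[v,i]` : all vertices `p` with `v ≤ p ≤ i`. -/
def chainCC (v i : V) : Finset V := univ.filter (fun p => v ≤ p ∧ p ≤ i)

/-- The chain `T[v,i)` : `T[v,i]` without `i`. -/
def chainCO (v i : V) : Finset V := (chainCC v i).erase i

/-- `p` is the parent of `j`. -/
def IsParent (p j : V) : Prop := p < j ∧ ¬ ∃ q, p < q ∧ q < j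

/-- `u` is s-maximal in `T_v`. -/
def SMax (s : V → ℝ) (v u : V) : Prop := v ≤ u ∧ ∀ p ∈ chainCO v u, s p < s u

/-- The window of `v`. -/
def win (w : V → ℝ) (w0 : ℝ) (v : V) : Finset V :=
  univ.filter (fun i => v ≤ i ∧ ∑ j ∈ chainCC v i, w j ≤ w0)

/-- `win*_v`: the s-maximal vertices of the window of `v`. -/
def winStar (w : V → ℝ) (w0 : ℝ) (s : V → ℝ) (v : V) : Finset V :=
  (win w w0 v).filter (fun i => SMax s v i)

/-- `win⁻_v = win_v \ win*_v`. -/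
def winMinus (w : V → ℝ) (w0 : ℝ) (s : V → ℝ) (v : V) : Finset V :=
  win w w0 v \ winStar w w0 s v

/-- `next_v(u)`: the greatest (closest to `u`) s-maximal element of `T[v,u)`,
if such a greatest element exists (junk value `v` otherwise). -/
def nxt (s : V → ℝ) (v u : V) : V :=
  if h : ∃ x ∈ chainCO v u, SMax s v x ∧ ∀ y ∈ chainCO v u, SMax s v y → y ≤ x
  then h.choose else v

/-- The vertices `j` outside `T[v,i]` whose parent lies in `T[v,i]`. -/
def branchOff (v i : V) : Finset V :=
  univ.filter (fun j => j ∉ chainCC v i ∧ ∃ p ∈ chainCC v i, IsParent p j)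

/-- `sum_F(v,i) = Σ F(j)` over `j ∉ T[v,i]` whose parent lies in `T[v,i]`. -/
def sumF (F : V → ℝ) (v i : V) : ℝ := ∑ j ∈ branchOff v i, F j

/-- `cost_F(v,i)`: `sum_F(v,i) + s_i` if `i ∈ win*_v`, and
`sum_F(v,i) + s_{next_v(i)}` otherwise (in particular for `i ∈ win⁻_v`). -/
def costF (w : V → ℝ) (w0 : ℝ) (s : V → ℝ) (F : V → ℝ) (v i : V) : ℝ :=
  if i ∈ winStar w w0 s v then sumF F v i + s i else sumF F v i + s (nxt s v i)

end

section

variable {V : Type} [PartialOrder V]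

theorem IsParent.le_of_lt (htree : ∀ a b c : V, a ≤ c → b ≤ c → a ≤ b ∨ b ≤ a)
    {p j q : V} (hp : IsParent p j) (hq : q < j) : q ≤ p := by
  rcases htree q p j hq.le hp.1.le with h | h
  · exact h
  · rcases h.eq_or_lt with h | h
    · exact h.ge
    · exact absurd ⟨q, h, hq⟩ hp.2

theorem IsParent.unique (htree : ∀ a b c : V, a ≤ c → b ≤ c → a ≤ b ∨ b ≤ a)
    {p q j : V} (hp : IsParent p j) (hq : IsParent q j) : p = q :=
  le_antisymm (hq.le_of_lt htree hp.1) (hp.le_of_lt htree hq.1)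

variable [Fintype V]

@[simp]
theorem mem_chainCC {v i p : V} : p ∈ chainCC v i ↔ v ≤ p ∧ p ≤ i := by
  simp [chainCC]

theorem mem_branchOff {v i j : V} :
    j ∈ branchOff v i ↔ j ∉ chainCC v i ∧ ∃ p ∈ chainCC v i, IsParent p j := by
  simp only [branchOff, mem_filter, mem_univ, true_and]

theorem chainCC_eq_union_of_isParent (htree : ∀ a b c : V, a ≤ c → b ≤ c → a ≤ b ∨ b ≤ a)
    {v px x i : V} (hvx : v ≤ x) (hpx : IsParent px x) (hxi : x ≤ i) :
    chainCC v i = chainCC v px ∪ chainCC x i := by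
  ext p
  simp only [mem_union, mem_chainCC]
  constructor
  · rintro ⟨hvp, hpi⟩
    rcases htree p x i hpi hxi with hpx' | hxp
    · rcases hpx'.eq_or_lt with rfl | hlt
      · exact Or.inr ⟨le_rfl, hpi⟩
      · exact Or.inl ⟨hvp, hpx.le_of_lt htree hlt⟩
    · exact Or.inr ⟨hxp, hpi⟩
  · rintro (⟨hvp, hppx⟩ | ⟨hxp, hpi⟩)
    · exact ⟨hvp, hppx.trans (hpx.1.le.trans hxi)⟩
    · exact ⟨hvx.trans hxp, hpi⟩

theorem disjoint_branchOff_of_lt (htree : ∀ a b c : V, a ≤ c → b ≤ c → a ≤ b ∨ b ≤ a)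
    {a b c d : V} (hbc : b < c) : Disjoint (branchOff a b) (branchOff c d) := by
  refine disjoint_left.2 fun j hab hcd => ?_
  obtain ⟨-, p, hp, hpj⟩ := mem_branchOff.1 hab
  obtain ⟨-, q, hq, hqj⟩ := mem_branchOff.1 hcd
  rw [mem_chainCC] at hp hq
  exact (hbc.trans_le (hq.1.trans (hqj.unique htree hpj).le)).not_ge hp.2

theorem eq_of_mem_branchOff_of_le {v px x j : V} (hpx : px < x) (hj : j ∈ branchOff v px)
    (hxj : x ≤ j) : j = x := by
  obtain ⟨-, p, hp, hpj⟩ := mem_branchOff.1 hj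
  refine (hxj.eq_or_lt.resolve_right fun hlt => hpj.2 ⟨x, ?_, hlt⟩).symm
  exact (mem_chainCC.1 hp).2.trans_lt hpx

theorem not_le_of_mem_branchOff {x i j px : V} (hpx : px < x) (hj : j ∈ branchOff x i) :
    ¬ j ≤ px := by
  obtain ⟨-, p, hp, hpj⟩ := mem_branchOff.1 hj
  intro hjpx
  exact lt_irrefl x ((((mem_chainCC.1 hp).1.trans_lt hpj.1).trans_le hjpx).trans hpx)

theorem branchOff_union_branchOff (htree : ∀ a b c : V, a ≤ c → b ≤ c → a ≤ b ∨ b ≤ a)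
    {v px x i : V} (hvx : v < x) (hpx : IsParent px x) (hxi : x ≤ i) :
    branchOff v px ∪ branchOff x i = insert x (branchOff v i) := by
  have hsplit := chainCC_eq_union_of_isParent htree hvx.le hpx hxi
  ext j
  rw [mem_union, mem_insert, mem_branchOff (v := v) (i := i), hsplit]
  simp only [mem_union, not_or]
  constructor
  · rintro (hj | hj)
    · by_cases hxj : x ≤ j
      · exact Or.inl (eq_of_mem_branchOff_of_le hpx.1 hj hxj)
      · obtain ⟨hjA, p, hp, hpj⟩ := mem_branchOff.1 hj
        exact Or.inr ⟨⟨hjA, fun h => hxj (mem_chainCC.1 h).1⟩, p, Or.inl hp, hpj⟩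
    · obtain ⟨hjB, p, hp, hpj⟩ := mem_branchOff.1 hj
      have hjA : j ∉ chainCC v px := fun h => not_le_of_mem_branchOff hpx.1 hj (mem_chainCC.1 h).2
      exact Or.inr ⟨⟨hjA, hjB⟩, p, Or.inr hp, hpj⟩
  · rintro (rfl | ⟨⟨hjA, hjB⟩, p, hp | hp, hpj⟩)
    · refine Or.inl (mem_branchOff.2 ⟨fun h => (mem_chainCC.1 h).2.not_gt hpx.1, px, ?_, hpx⟩)
      exact mem_chainCC.2 ⟨hpx.le_of_lt htree hvx, le_rfl⟩
    · exact Or.inl (mem_branchOff.2 ⟨hjA, p, hp, hpj⟩)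
    · exact Or.inr (mem_branchOff.2 ⟨hjB, p, hp, hpj⟩)

theorem sumF_add_sumF (htree : ∀ a b c : V, a ≤ c → b ≤ c → a ≤ b ∨ b ≤ a) (F : V → ℝ)
    {v px x i : V} (hvx : v < x) (hpx : IsParent px x) (hxi : x ≤ i) :
    sumF F v px + sumF F x i = F x + sumF F v i := by
  have hx : x ∉ branchOff v i := fun h => (mem_branchOff.1 h).1 (mem_chainCC.2 ⟨hvx.le, hxi⟩)
  rw [sumF, sumF, ← sum_union (disjoint_branchOff_of_lt htree hpx.1),
    branchOff_union_branchOff htree hvx hpx hxi, sum_insert hx, sumF]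

end

theorem stmt_2_general (V : Type) [Fintype V] [PartialOrder V]
    (htree : ∀ a b c : V, a ≤ c → b ≤ c → a ≤ b ∨ b ≤ a)
    (F : V → ℝ)
    (v x i : V) (hvx : v < x) (hxi : x ≤ i)
    (px : V) (hpx : IsParent px x) :
    sumF F v i - sumF F x i = sumF F v px - F x := by
  linarith [sumF_add_sumF htree F hvx hpx hxi]

theorem stmt_2 (V : Type) [Fintype V] [Nonempty V] [PartialOrder V]
    (htree : ∀ a b c : V, a ≤ c → b ≤ c → a ≤ b ∨ b ≤ a)
    (F : V → ℝ)
    (v x i : V) (hvx : v < x) (hxi : x ≤ i)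
    (px : V) (hpx : IsParent px x) :
    sumF F v i - sumF F x i = sumF F v px - F x :=
  stmt_2_general V htree F v x i hvx hxi px hpx
end

section
/- Let u, v, i ∈ V with u ≤ v and v ≤ i (u is an ancestor of v, and i is a descendant of v). If i ∉ win*_v, then i ∉ win*_u. -/
open Finset
open scoped Classical

/-! Since `u ≤ v`, the chain `T[v,i]` is a subchain of `T[u,i]`; with nonnegative weights its
weight sum is smaller and the s-maximality condition quantifies over fewer vertices, so
`i ∈ win*_u` forces `i ∈ win*_v`. -/

section

variable {V : Type} [Fintype V] [PartialOrder V]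

theorem chainCC_subset_chainCC_of_le {u v : V} (huv : u ≤ v) (i : V) :
    chainCC v i ⊆ chainCC u i := by
  intro p hp
  simp only [chainCC, mem_filter, mem_univ, true_and] at hp ⊢
  exact ⟨huv.trans hp.1, hp.2⟩

theorem chainCO_subset_chainCO_of_le {u v : V} (huv : u ≤ v) (i : V) :
    chainCO v i ⊆ chainCO u i :=
  erase_subset_erase i (chainCC_subset_chainCC_of_le huv i)

theorem SMax.of_le {s : V → ℝ} {u v i : V} (hi : SMax s u i) (huv : u ≤ v) (hvi : v ≤ i) :
    SMax s v i :=
  ⟨hvi, fun p hp => hi.2 p (chainCO_subset_chainCO_of_le huv i hp)⟩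

theorem mem_win_of_le {w : V → ℝ} (hw : ∀ j, 0 ≤ w j) {w0 : ℝ} {u v i : V}
    (hi : i ∈ win w w0 u) (huv : u ≤ v) (hvi : v ≤ i) : i ∈ win w w0 v := by
  simp only [win, mem_filter, mem_univ, true_and] at hi ⊢
  refine ⟨hvi, le_trans ?_ hi.2⟩
  exact sum_le_sum_of_subset_of_nonneg (chainCC_subset_chainCC_of_le huv i)
    fun j _ _ => hw j

theorem mem_winStar_of_le {w : V → ℝ} (hw : ∀ j, 0 ≤ w j) {w0 : ℝ} {s : V → ℝ} {u v i : V}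
    (hi : i ∈ winStar w w0 s u) (huv : u ≤ v) (hvi : v ≤ i) : i ∈ winStar w w0 s v := by
  rw [winStar, mem_filter] at hi ⊢
  exact ⟨mem_win_of_le hw hi.1 huv hvi, hi.2.of_le huv hvi⟩

end

theorem stmt_8_general (V : Type) [Fintype V] [PartialOrder V]
    (w : V → ℝ) (s : V → ℝ) (w0 : ℝ)
    (hw : ∀ i : V, 0 ≤ w i)
    (u v i : V) (huv : u ≤ v) (hvi : v ≤ i)
    (h : i ∉ winStar w w0 s v) :
    i ∉ winStar w w0 s u :=
  fun hu => h (mem_winStar_of_le hw hu huv hvi)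

theorem stmt_8 (V : Type) [Fintype V] [Nonempty V] [PartialOrder V]
    (htree : ∀ a b c : V, a ≤ c → b ≤ c → a ≤ b ∨ b ≤ a)
    (w : V → ℝ) (s : V → ℝ) (w0 : ℝ)
    (hw : ∀ i : V, 0 ≤ w i) (hw0 : 0 ≤ w0)
    (u v i : V) (huv : u ≤ v) (hvi : v ≤ i)
    (h : i ∉ winStar w w0 s v) :
    i ∉ winStar w w0 s u :=
  stmt_8_general V w s w0 hw u v i huv hvi h
end

section
/- Let c be a child of v, let x ∈ win*_c, and assume x ∈ win_v but x ∉ win*_v. Then for every i ∈ win_v with i ∈ T_c, i ≠ c, and next_c(i) = x, one has next_v(i) = v. -/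
open Finset
open scoped Classical

/-! If some `y` in `T(v,i)` were s-maximal in `T_v`, it would lie in `T_c` (as `c` is the child of
`v` towards `i`) and be s-maximal there too, hence `y ≤ x = next_c(i)`. Every `p ∈ T[v,x)` is then
either below `y`, so `s p < s y ≤ s x`, or in `T[c,x)`, so `s p < s x`: thus `x` would be s-maximal
in `T_v`, contradicting `x ∉ win*_v`. So `v` is the only s-maximal vertex of `T[v,i)`. -/

variable {V : Type} [PartialOrder V]

lemma le_of_isParent (htree : ∀ a b c : V, a ≤ c → b ≤ c → a ≤ b ∨ b ≤ a)
    {v c y i : V} (hc : IsParent v c) (hvy : v < y) (hyi : y ≤ i) (hci : c ≤ i) : c ≤ y := by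
  rcases htree y c i hyi hci with hyc | hcy
  · rcases hyc.lt_or_eq with hyc | rfl
    · exact absurd ⟨y, hvy, hyc⟩ hc.2
    · exact le_rfl
  · exact hcy

variable [Fintype V]

lemma mem_chainCO {a b p : V} : p ∈ chainCO a b ↔ a ≤ p ∧ p < b := by
  simp only [chainCO, chainCC, mem_erase, mem_filter, mem_univ, true_and, lt_iff_le_and_ne]
  tauto

lemma sMax_self (s : V → ℝ) (a : V) : SMax s a a :=
  ⟨le_rfl, fun _ hp => absurd (mem_chainCO.1 hp).2 (mem_chainCO.1 hp).1.not_gt⟩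

lemma SMax.of_le_s10 {s : V → ℝ} {v c y : V} (h : SMax s v y) (hvc : v ≤ c) (hcy : c ≤ y) :
    SMax s c y :=
  ⟨hcy, fun _ hp => h.2 _ (mem_chainCO.2 ⟨hvc.trans (mem_chainCO.1 hp).1, (mem_chainCO.1 hp).2⟩)⟩

lemma SMax.lt {s : V → ℝ} {c x y : V} (h : SMax s c x) (hcy : c ≤ y) (hyx : y < x) :
    s y < s x :=
  h.2 y (mem_chainCO.2 ⟨hcy, hyx⟩)

lemma SMax.of_sMax_of_le (htree : ∀ a b c : V, a ≤ c → b ≤ c → a ≤ b ∨ b ≤ a)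
    {s : V → ℝ} {v c x y : V} (hy : SMax s v y) (hx : SMax s c x) (hcy : c ≤ y) (hyx : y ≤ x) :
    SMax s v x := by
  have hsyx : s y ≤ s x := by
    rcases hyx.lt_or_eq with hlt | rfl
    · exact (hx.lt hcy hlt).le
    · exact le_rfl
  refine ⟨hy.1.trans hyx, fun p hp => ?_⟩
  obtain ⟨hvp, hpx⟩ := mem_chainCO.1 hp
  rcases htree p y x hpx.le hyx with hpy | hyp
  · rcases hpy.lt_or_eq with hpy | rfl
    · exact (hy.2 p (mem_chainCO.2 ⟨hvp, hpy⟩)).trans_le hsyx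
    · exact hx.lt hcy hpx
  · exact hx.lt (hcy.trans hyp) hpx

def sMaxBelow (s : V → ℝ) (a b : V) : Set V := {y | y ∈ chainCO a b ∧ SMax s a y}

lemma exists_isGreatest_sMaxBelow (htree : ∀ a b c : V, a ≤ c → b ≤ c → a ≤ b ∨ b ≤ a)
    (s : V → ℝ) {a b : V} (hab : a < b) : ∃ z, IsGreatest (sMaxBelow s a b) z := by
  have hfin : (sMaxBelow s a b).Finite := Set.toFinite _
  obtain ⟨z, hz⟩ := hfin.exists_maximal ⟨a, mem_chainCO.2 ⟨le_rfl, hab⟩, sMax_self s a⟩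
  refine ⟨z, hz.prop, fun y hy => ?_⟩
  rcases htree y z b (mem_chainCO.1 hy.1).2.le (mem_chainCO.1 hz.prop.1).2.le with hyz | hzy
  · exact hyz
  · exact hz.le_of_ge hy hzy

lemma nxt_eq_of_isGreatest {s : V → ℝ} {a b z : V} (hz : IsGreatest (sMaxBelow s a b) z) :
    nxt s a b = z := by
  have hex : ∃ x ∈ chainCO a b, SMax s a x ∧ ∀ y ∈ chainCO a b, SMax s a y → y ≤ x :=
    ⟨z, hz.1.1, hz.1.2, fun y hy hyS => hz.2 ⟨hy, hyS⟩⟩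
  obtain ⟨hmem, hsmax, hgreat⟩ := hex.choose_spec
  rw [nxt, dif_pos hex]
  exact (hz.unique ⟨⟨hmem, hsmax⟩, fun y hy => hgreat y hy.1 hy.2⟩).symm

lemma isGreatest_nxt (htree : ∀ a b c : V, a ≤ c → b ≤ c → a ≤ b ∨ b ≤ a)
    (s : V → ℝ) {a b : V} (hab : a < b) : IsGreatest (sMaxBelow s a b) (nxt s a b) := by
  obtain ⟨z, hz⟩ := exists_isGreatest_sMaxBelow htree s hab
  rwa [nxt_eq_of_isGreatest hz]

theorem stmt_10_general (V : Type) [Fintype V] [PartialOrder V]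
    (htree : ∀ a b c : V, a ≤ c → b ≤ c → a ≤ b ∨ b ≤ a)
    (w : V → ℝ) (s : V → ℝ) (w0 : ℝ)
    (v c : V) (hc : IsParent v c)
    (x : V)
    (hxw : x ∈ win w w0 v) (hxs : x ∉ winStar w w0 s v) :
    ∀ i ∈ win w w0 v, c ≤ i → i ≠ c → nxt s c i = x → nxt s v i = v := by
  intro i _ hci hic hnxt
  have hci : c < i := hci.lt_of_ne' hic
  have hvi : v < i := hc.1.trans hci
  have hx : IsGreatest (sMaxBelow s c i) x := hnxt ▸ isGreatest_nxt htree s hci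
  refine nxt_eq_of_isGreatest ⟨⟨mem_chainCO.2 ⟨le_rfl, hvi⟩, sMax_self s v⟩, ?_⟩
  rintro y ⟨hy, hyS⟩
  by_contra hyv
  obtain ⟨hvy, hyi⟩ := mem_chainCO.1 hy
  have hcy : c ≤ y := le_of_isParent htree hc (hvy.lt_of_not_ge hyv) hyi.le hci.le
  have hyx : y ≤ x := hx.2 ⟨mem_chainCO.2 ⟨hcy, hyi⟩, hyS.of_le_s10 hc.1.le hcy⟩
  exact hxs (mem_filter.2 ⟨hxw, hyS.of_sMax_of_le htree hx.1.2 hcy hyx⟩)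

theorem stmt_10 (V : Type) [Fintype V] [Nonempty V] [PartialOrder V]
    (htree : ∀ a b c : V, a ≤ c → b ≤ c → a ≤ b ∨ b ≤ a)
    (w : V → ℝ) (s : V → ℝ) (w0 : ℝ)
    (hw : ∀ i : V, 0 ≤ w i) (hw0 : 0 ≤ w0)
    (v c : V) (hc : IsParent v c)
    (x : V) (hx : x ∈ winStar w w0 s c)
    (hxw : x ∈ win w w0 v) (hxs : x ∉ winStar w w0 s v) :
    ∀ i ∈ win w w0 v, c ≤ i → i ≠ c → nxt s c i = x → nxt s v i = v :=
  stmt_10_general V htree w s w0 v c hc x hxw hxs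
end
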